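/- arXiv:1303.3482 — 5 statements merged into one kernel-verified Lean document; each statement's English description precedes it below -/
import Mathlib

section
/- If μ, ν > 0, μ + ν < 1, and a, b are real numbers with b > a + 2, then there exists a constant C (depending only on μ, ν) such that ∑_{k} 1/((k-a)^{1-μ} (b-k)^{1-ν}) ≤ C / (b-a)^{1-μ-ν}, where the sum ranges over integers k with k - a ≥ 1 and b - k ≥ 1. -/
/-!
Split each summand according to which of `k - a`, `b - k` is at least `(b - a) / 2`; by
monotonicity that factor is at most `2 (b - a)` to its (non-positive) exponent. What remains are
one-sided sums `∑ (k - a) ^ (μ - 1)` over at most `b - a` consecutive integers, and concavity of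
`x ^ μ` (`μ x ^ (μ - 1) ≤ x ^ μ - (x - 1) ^ μ`) telescopes such a sum to at most `(b - a) ^ μ / μ`.
-/

open Real Finset

lemma mul_rpow_sub_one_le_rpow_sub_rpow {p x : ℝ} (hp₀ : 0 ≤ p) (hp₁ : p ≤ 1) (hx : 1 ≤ x) :
    p * x ^ (p - 1) ≤ x ^ p - (x - 1) ^ p := by
  have hx₀ : 0 < x := by linarith
  have hinv : x⁻¹ ≤ 1 := inv_le_one_of_one_le₀ hx
  have bernoulli := rpow_one_add_le_one_add_mul_self (s := -x⁻¹) (by linarith) hp₀ hp₁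
  calc p * x ^ (p - 1) = x ^ p - (1 + p * -x⁻¹) * x ^ p := by
        rw [rpow_sub_one hx₀.ne']; field_simp; ring
    _ ≤ x ^ p - (1 + -x⁻¹) ^ p * x ^ p := by gcongr
    _ = x ^ p - (x - 1) ^ p := by
        rw [← mul_rpow (by linarith) hx₀.le]; congr 2; field_simp; ring

lemma sum_range_rpow_sub_one_le {p : ℝ} (hp₀ : 0 < p) (hp₁ : p ≤ 1) (n : ℕ) :
    ∑ j ∈ range n, ((j : ℝ) + 1) ^ (p - 1) ≤ (n : ℝ) ^ p / p := by
  rw [le_div_iff₀ hp₀, sum_mul]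
  calc ∑ j ∈ range n, ((j : ℝ) + 1) ^ (p - 1) * p
      ≤ ∑ j ∈ range n, (((j + 1 : ℕ) : ℝ) ^ p - (j : ℝ) ^ p) := sum_le_sum fun j _ => by
        push_cast
        simpa [mul_comm] using
          mul_rpow_sub_one_le_rpow_sub_rpow hp₀.le hp₁ (x := j + 1) (by linarith [j.cast_nonneg (α := ℝ)])
    _ = (n : ℝ) ^ p := by
        rw [sum_range_sub (fun j : ℕ => (j : ℝ) ^ p)]; simp [zero_rpow hp₀.ne']

lemma sum_Icc_rpow_sub_one_le {p a : ℝ} (hp₀ : 0 < p) (hp₁ : p ≤ 1) {m : ℤ} (hm : a + 1 ≤ m)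
    (M : ℤ) : ∑ k ∈ Icc m M, ((k : ℝ) - a) ^ (p - 1) ≤ (#(Icc m M) : ℝ) ^ p / p := by
  rw [Int.card_Icc, Int.Icc_eq_finset_map, sum_map]
  refine (sum_le_sum fun j _ => ?_).trans (sum_range_rpow_sub_one_le hp₀ hp₁ _)
  refine rpow_le_rpow_of_nonpos (by positivity) ?_ (by linarith)
  simp; linarith

lemma map_neg_Icc {α : Type*} [AddCommGroup α] [LinearOrder α] [IsOrderedAddMonoid α]
    [LocallyFiniteOrder α] (a b : α) :
    (Icc a b).map (Equiv.neg α).toEmbedding = Icc (-b) (-a) := by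
  ext x; simp [neg_le, le_neg, and_comm]

lemma sum_Icc_sub_rpow_sub_one_le {p b : ℝ} (hp₀ : 0 < p) (hp₁ : p ≤ 1) (m : ℤ) {M : ℤ}
    (hM : M ≤ b - 1) : ∑ k ∈ Icc m M, (b - k) ^ (p - 1) ≤ (#(Icc m M) : ℝ) ^ p / p := by
  have h := sum_Icc_rpow_sub_one_le hp₀ hp₁ (a := -b) (m := -M) (by push_cast; linarith) (-m)
  rw [← map_neg_Icc, sum_map, card_map] at h
  simpa [sub_eq_add_neg, add_comm] using h

lemma mem_Icc_ceil_floor_iff {a b : ℝ} {k : ℤ} :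
    k ∈ Icc ⌈a + 1⌉ ⌊b - 1⌋ ↔ 1 ≤ (k : ℝ) - a ∧ 1 ≤ b - k := by
  rw [mem_Icc, Int.ceil_le, Int.le_floor]
  constructor <;> rintro ⟨h₁, h₂⟩ <;> constructor <;> linarith

lemma tsum_ite_eq_sum_Icc_ceil_floor {M : Type*} [AddCommMonoid M] [TopologicalSpace M]
    (f : ℤ → M) (a b : ℝ) :
    (∑' k : ℤ, if 1 ≤ (k : ℝ) - a ∧ 1 ≤ b - k then f k else 0) =
      ∑ k ∈ Icc ⌈a + 1⌉ ⌊b - 1⌋, f k := by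
  rw [sum_eq_tsum_indicator]
  simp only [Set.indicator_apply, mem_coe, mem_Icc_ceil_floor_iff]

lemma card_Icc_ceil_floor_le {a b : ℝ} (hab : a ≤ b) : (#(Icc ⌈a + 1⌉ ⌊b - 1⌋) : ℝ) ≤ b - a := by
  rw [Int.card_Icc, ← Int.cast_natCast, Int.toNat_eq_max, Int.cast_max]
  have h₁ := Int.le_ceil (a + 1)
  have h₂ := Int.floor_le (b - 1)
  push_cast
  exact max_le (by linarith) (by linarith)

lemma rpow_le_two_mul_rpow_of_half_le {x L α : ℝ} (hL : 0 < L) (hx : L / 2 ≤ x)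
    (hα₁ : -1 ≤ α) (hα₀ : α ≤ 0) : x ^ α ≤ 2 * L ^ α := calc
  x ^ α ≤ (L / 2) ^ α := rpow_le_rpow_of_nonpos (by positivity) hx hα₀
  _ = L ^ α / 2 ^ α := div_rpow hL.le zero_le_two _
  _ ≤ L ^ α / 2 ^ (-1 : ℝ) := by
      gcongr
      exact one_le_two
  _ = 2 * L ^ α := by rw [rpow_neg_one]; field_simp

lemma rpow_mul_rpow_le_two_mul {x y α β : ℝ} (hx : 0 < x) (hy : 0 < y)
    (hα₁ : -1 ≤ α) (hα₀ : α ≤ 0) (hβ₁ : -1 ≤ β) (hβ₀ : β ≤ 0) :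
    x ^ α * y ^ β ≤ 2 * ((x + y) ^ β * x ^ α + (x + y) ^ α * y ^ β) := by
  have hxy : 0 < x + y := by linarith
  have := rpow_pos_of_pos hx α
  have := rpow_pos_of_pos hy β
  have := rpow_pos_of_pos hxy α
  have := rpow_pos_of_pos hxy β
  rcases le_total x y with h | h
  · have : y ^ β ≤ 2 * (x + y) ^ β := rpow_le_two_mul_rpow_of_half_le hxy (by linarith) hβ₁ hβ₀
    nlinarith
  · have : x ^ α ≤ 2 * (x + y) ^ α := rpow_le_two_mul_rpow_of_half_le hxy (by linarith) hα₁ hα₀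
    nlinarith

theorem discrete_beta_sum_bound (mu nu : ℝ) (hmu : 0 < mu) (hnu : 0 < nu)
    (hsum : mu + nu < 1) :
    ∃ C : ℝ, 0 < C ∧ ∀ a b : ℝ, b > a + 2 →
      (∑' k : ℤ, if 1 ≤ (k : ℝ) - a ∧ 1 ≤ b - k then
          ((k : ℝ) - a) ^ (mu - 1) * (b - k) ^ (nu - 1) else 0)
        ≤ C / (b - a) ^ (1 - mu - nu) := by
  refine ⟨2 * (1 / mu + 1 / nu), by positivity, fun a b hab => ?_⟩
  have hL : 0 < b - a := by linarith
  set s := Icc ⌈a + 1⌉ ⌊b - 1⌋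
  have hcard : (#s : ℝ) ≤ b - a := card_Icc_ceil_floor_le (by linarith)
  rw [tsum_ite_eq_sum_Icc_ceil_floor]
  calc ∑ k ∈ s, ((k : ℝ) - a) ^ (mu - 1) * (b - k) ^ (nu - 1)
      ≤ ∑ k ∈ s, 2 * ((b - a) ^ (nu - 1) * ((k : ℝ) - a) ^ (mu - 1)
          + (b - a) ^ (mu - 1) * (b - k) ^ (nu - 1)) := sum_le_sum fun k hk => by
        obtain ⟨hka, hbk⟩ := mem_Icc_ceil_floor_iff.1 hk
        simpa using rpow_mul_rpow_le_two_mul (x := k - a) (y := b - k) (by linarith) (by linarith)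
          (by linarith) (by linarith) (by linarith) (by linarith)
    _ = 2 * ((b - a) ^ (nu - 1) * ∑ k ∈ s, ((k : ℝ) - a) ^ (mu - 1)
          + (b - a) ^ (mu - 1) * ∑ k ∈ s, (b - (k : ℝ)) ^ (nu - 1)) := by
        rw [← mul_sum, sum_add_distrib, ← mul_sum, ← mul_sum]
    _ ≤ 2 * ((b - a) ^ (nu - 1) * ((b - a) ^ mu / mu)
          + (b - a) ^ (mu - 1) * ((b - a) ^ nu / nu)) := by
        gcongr
        · exact (sum_Icc_rpow_sub_one_le hmu (by linarith) (Int.le_ceil _) _).trans (by gcongr)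
        · exact (sum_Icc_sub_rpow_sub_one_le hnu (by linarith) _ (Int.floor_le _)).trans (by gcongr)
    _ = 2 * (1 / mu + 1 / nu) / (b - a) ^ (1 - mu - nu) := by
        rw [div_eq_mul_inv _ ((b - a) ^ _), ← rpow_neg hL.le]
        have e : ∀ p q : ℝ, (b - a) ^ (p - 1) * (b - a) ^ q = (b - a) ^ (-(1 - p - q)) := by
          intro p q; rw [← rpow_add hL]; ring_nf
        rw [mul_div_assoc', mul_div_assoc', e, e]; ring_nf
end

section
/- If μ, ν > 0 with μ + ν < 1, and a, b are real numbers with a + b > 0, then there is a constant C depending only on μ and ν such that ∑_{k=1}^{∞} 1/((k+b)^{1-μ}(k-a)^{1-ν}) ≤ C/(a+b)^{1-μ-ν}, where the sum is restricted to integers k ≥ 1 with k + b ≥ 1 and k - a ≥ 1. -/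
/-!
With `s = a + b` and `t = k - a`, the summand is `(t + s) ^ (μ - 1) * t ^ (ν - 1)`, a function
decreasing in `t > 0`, sampled at the points `t ≥ 1` of a shifted unit lattice; so the series is
at most its integral over `(0, ∞)`. On `(0, s]` the kernel is at most `s ^ (μ - 1) * t ^ (ν - 1)`
and on `(s, ∞)` at most `t ^ (μ + ν - 2)`, whose integrals are `s ^ (μ + ν - 1) / ν` and
`s ^ (μ + ν - 1) / (1 - μ - ν)`.
-/

open Real Set MeasureTheory intervalIntegral

/- Unlike `AntitoneOn.sum_le_integral`, monotonicity is only required on the open half-line, so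
that `f` may have a singularity at `0` (where `0 ^ r = 0` breaks monotonicity). -/
theorem AntitoneOn.tsum_comp_add_le_integral_Ioi_zero {f : ℝ → ℝ} (hf : AntitoneOn f (Ioi 0))
    (hint : IntegrableOn f (Ioi 0)) (hnn : ∀ x ∈ Ioi 0, 0 ≤ f x) {c : ℝ} (hc : 0 ≤ c) :
    ∑' n : ℕ, f (c + n + 1) ≤ ∫ x in Ioi 0, f x := by
  have hint_unit (n : ℕ) : IntervalIntegrable f volume (c + n) (c + n + 1) := by
    rw [intervalIntegrable_iff_integrableOn_Ioc_of_le (by linarith)]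
    exact hint.mono_set (Ioc_subset_Ioi_self.trans (Ioi_subset_Ioi (by positivity)))
  refine Real.tsum_le_of_sum_range_le (fun n => hnn _ (show 0 < c + n + 1 by positivity))
    fun N => ?_
  calc ∑ n ∈ Finset.range N, f (c + n + 1)
      ≤ ∑ n ∈ Finset.range N, ∫ x in c + n..c + n + 1, f x := by
        refine Finset.sum_le_sum fun n _ => ?_
        have hpos : (0 : ℝ) < c + n + 1 := by positivity
        calc f (c + n + 1) = ∫ _ in c + n..c + n + 1, f (c + n + 1) := by simp
          _ ≤ _ := integral_mono_on_of_le_Ioo (by linarith) intervalIntegrable_const (hint_unit n)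
              fun x hx => hf (lt_of_le_of_lt (by positivity) hx.1) hpos hx.2.le
    _ = ∫ x in c + (0 : ℕ)..c + N, f x := by
        simpa [add_assoc] using sum_integral_adjacent_intervals (a := fun n : ℕ => c + n)
          fun n _ => by simpa [add_assoc] using hint_unit n
    _ ≤ ∫ x in Ioi 0, f x := by
        rw [Nat.cast_zero, add_zero, integral_of_le (by simp)]
        exact setIntegral_mono_set hint (ae_restrict_of_forall_mem measurableSet_Ioi hnn)
          (Ioc_subset_Ioi_self.trans (Ioi_subset_Ioi hc)).eventuallyLE

theorem integrableOn_rpow_Ioc_zero {r s : ℝ} (hr : -1 < r) (hs : 0 ≤ s) :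
    IntegrableOn (fun x => x ^ r) (Ioc 0 s) :=
  (intervalIntegrable_iff_integrableOn_Ioc_of_le hs).1 (intervalIntegrable_rpow' hr)

noncomputable def betaKernel (μ ν s x : ℝ) : ℝ := (x + s) ^ (μ - 1) * x ^ (ν - 1)

namespace betaKernel

variable {μ ν s x : ℝ}

theorem nonneg (hs : 0 ≤ s) (hx : 0 ≤ x) : 0 ≤ betaKernel μ ν s x := by
  unfold betaKernel; positivity

theorem measurable : Measurable (betaKernel μ ν s) := by
  unfold betaKernel; fun_prop

theorem antitoneOn (hμ : μ ≤ 1) (hν : ν ≤ 1) (hs : 0 ≤ s) :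
    AntitoneOn (betaKernel μ ν s) (Ioi 0) := by
  intro x (hx : 0 < x) y (hy : 0 < y) hxy
  exact mul_le_mul (rpow_le_rpow_of_nonpos (by positivity) (by linarith) (by linarith))
    (rpow_le_rpow_of_nonpos hx hxy (by linarith)) (by positivity) (by positivity)

theorem le_const_mul_rpow (hμ : μ ≤ 1) (hs : 0 < s) (hx : 0 ≤ x) :
    betaKernel μ ν s x ≤ s ^ (μ - 1) * x ^ (ν - 1) := by
  unfold betaKernel
  gcongr ?_ * _
  exact rpow_le_rpow_of_nonpos hs (by linarith) (by linarith)

theorem le_rpow (hμ : μ ≤ 1) (hs : 0 ≤ s) (hx : 0 < x) :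
    betaKernel μ ν s x ≤ x ^ (μ + ν - 2) := by
  calc betaKernel μ ν s x ≤ x ^ (μ - 1) * x ^ (ν - 1) := by
        unfold betaKernel
        gcongr ?_ * _
        exact rpow_le_rpow_of_nonpos hx (by linarith) (by linarith)
    _ = x ^ (μ + ν - 2) := by rw [← rpow_add hx]; ring_nf

theorem integrableOn_Ioc (hμ : μ ≤ 1) (hν : 0 < ν) (hs : 0 < s) :
    IntegrableOn (betaKernel μ ν s) (Ioc 0 s) := by
  refine ((integrableOn_rpow_Ioc_zero (r := ν - 1) (by linarith) hs.le).const_mul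
    (s ^ (μ - 1))).mono' measurable.aestronglyMeasurable ?_
  filter_upwards [ae_restrict_mem measurableSet_Ioc] with x hx
  rw [norm_of_nonneg (nonneg hs.le hx.1.le)]
  exact le_const_mul_rpow hμ hs hx.1.le

theorem integrableOn_Ioi (hμ : μ ≤ 1) (hμν : μ + ν < 1) (hs : 0 < s) :
    IntegrableOn (betaKernel μ ν s) (Ioi s) := by
  refine (integrableOn_Ioi_rpow_of_lt (a := μ + ν - 2) (by linarith) hs).mono'
    measurable.aestronglyMeasurable ?_
  filter_upwards [ae_restrict_mem measurableSet_Ioi] with x (hx : s < x)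
  rw [norm_of_nonneg (nonneg hs.le (by linarith))]
  exact le_rpow hμ hs.le (by linarith)

theorem integrableOn_Ioi_zero (hν : 0 < ν) (hμν : μ + ν < 1) (hs : 0 < s) :
    IntegrableOn (betaKernel μ ν s) (Ioi 0) := by
  have hμ : μ ≤ 1 := by linarith
  rw [← Ioc_union_Ioi_eq_Ioi hs.le]
  exact (integrableOn_Ioc hμ hν hs).union (integrableOn_Ioi hμ hμν hs)

theorem integral_Ioi_zero_le (hν : 0 < ν) (hμν : μ + ν < 1) (hs : 0 < s) :
    ∫ x in Ioi 0, betaKernel μ ν s x ≤ (1 / ν + 1 / (1 - μ - ν)) * s ^ (μ + ν - 1) := by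
  have hμ : μ ≤ 1 := by linarith
  rw [← Ioc_union_Ioi_eq_Ioi hs.le, setIntegral_union Ioc_disjoint_Ioi_same measurableSet_Ioi
    (integrableOn_Ioc hμ hν hs) (integrableOn_Ioi hμ hμν hs)]
  have hpow : s ^ (μ - 1) * s ^ ν = s ^ (μ + ν - 1) := by rw [← rpow_add hs]; ring_nf
  calc _ ≤ (∫ x in Ioc 0 s, s ^ (μ - 1) * x ^ (ν - 1)) + ∫ x in Ioi s, x ^ (μ + ν - 2) :=
        add_le_add
          (setIntegral_mono_on (integrableOn_Ioc hμ hν hs)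
            ((integrableOn_rpow_Ioc_zero (by linarith) hs.le).const_mul _) measurableSet_Ioc
            fun x hx => le_const_mul_rpow hμ hs hx.1.le)
          (setIntegral_mono_on (integrableOn_Ioi hμ hμν hs)
            (integrableOn_Ioi_rpow_of_lt (by linarith) hs) measurableSet_Ioi
            fun x (hx : s < x) => le_rpow hμ hs.le (hs.trans hx))
    _ = (1 / ν + 1 / (1 - μ - ν)) * s ^ (μ + ν - 1) := by
        rw [MeasureTheory.integral_const_mul, ← integral_of_le hs.le,
          integral_rpow (Or.inl (by linarith)), integral_Ioi_rpow_of_lt (by linarith) hs]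
        have h1 : ν - 1 + 1 = ν := by ring
        have h2 : μ + ν - 2 + 1 = μ + ν - 1 := by ring
        have h3 : μ + ν - 1 ≠ 0 := by linarith
        rw [h1, h2, zero_rpow hν.ne', sub_zero, mul_div_assoc', hpow,
          show 1 - μ - ν = -(μ + ν - 1) by ring]
        field_simp

end betaKernel

theorem tsum_ite_eq_tsum_betaKernel (μ ν : ℝ) {a b : ℝ} (hab : 0 < a + b) :
    (∑' k : ℕ, if 1 ≤ k ∧ 1 ≤ (k : ℝ) + b ∧ 1 ≤ (k : ℝ) - a then
        ((k : ℝ) + b) ^ (μ - 1) * ((k : ℝ) - a) ^ (ν - 1) else 0)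
      = ∑' n : ℕ, betaKernel μ ν (a + b) (⌈a⌉₊ - a + n + 1) := by
  have hmem (k : ℕ) : (1 ≤ k ∧ 1 ≤ (k : ℝ) + b ∧ 1 ≤ (k : ℝ) - a) ↔ ⌈a⌉₊ + 1 ≤ k := by
    constructor
    · rintro ⟨hk, -, hka⟩
      obtain ⟨m, rfl⟩ := Nat.exists_eq_add_of_le' hk
      have : ⌈a⌉₊ ≤ m := Nat.ceil_le.2 (by push_cast at hka; linarith)
      omega
    · intro hk
      have hk' : (⌈a⌉₊ : ℝ) + 1 ≤ k := by exact_mod_cast hk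
      have := Nat.le_ceil a
      exact ⟨by omega, by linarith, by linarith⟩
  rw [← (add_left_injective (⌈a⌉₊ + 1)).tsum_eq]
  · congr 1 with n
    rw [if_pos ((hmem _).2 (Nat.le_add_left _ _)), betaKernel]
    push_cast
    ring_nf
  · intro k hk
    have := (hmem k).1 (by by_contra h; exact hk (if_neg h))
    exact ⟨k - (⌈a⌉₊ + 1), Nat.sub_add_cancel this⟩

theorem discrete_convolution_tail_bound (mu nu : ℝ) (hmu : 0 < mu) (hnu : 0 < nu)
    (hsum : mu + nu < 1) :
    ∃ C : ℝ, 0 < C ∧ ∀ a b : ℝ, 0 < a + b →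
      (∑' k : ℕ, if 1 ≤ k ∧ 1 ≤ (k : ℝ) + b ∧ 1 ≤ (k : ℝ) - a then
          ((k : ℝ) + b) ^ (mu - 1) * ((k : ℝ) - a) ^ (nu - 1) else 0)
        ≤ C / (a + b) ^ (1 - mu - nu) := by
  have hσ : 0 < 1 - mu - nu := by linarith
  refine ⟨1 / nu + 1 / (1 - mu - nu), by positivity, fun a b hab => ?_⟩
  rw [tsum_ite_eq_tsum_betaKernel mu nu hab]
  calc _ ≤ ∫ x in Ioi 0, betaKernel mu nu (a + b) x :=
        (betaKernel.antitoneOn (by linarith) (by linarith) hab.le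
          ).tsum_comp_add_le_integral_Ioi_zero (betaKernel.integrableOn_Ioi_zero hnu hsum hab)
          (fun x hx => betaKernel.nonneg hab.le (le_of_lt hx)) (sub_nonneg.2 (Nat.le_ceil a))
    _ ≤ (1 / nu + 1 / (1 - mu - nu)) * (a + b) ^ (mu + nu - 1) :=
        betaKernel.integral_Ioi_zero_le hnu hsum hab
    _ = _ := by rw [div_eq_mul_inv _ ((a + b) ^ _), ← rpow_neg hab.le]; ring_nf
end

section
/- If 0 < ν < 1 - μ with μ > 0 and y ≥ 2 is a real number, then there exists a constant C depending only on μ and ν such that ∑_{k ≥ 1+y} (log k)/(k^{1-μ} (k-y)^{1-ν}) ≤ C (log y)/y^{1-μ-ν}, where the sum ranges over integers k ≥ 1+y. -/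
open Real

/-- MVT-type bound for positive exponents: `p * (a+1)^(p-1) ≤ (a+1)^p - a^p`. -/
lemma rpow_mvt_pos {p : ℝ} (hp : 0 < p) (hp1 : p ≤ 1) {a : ℝ} (ha : 0 ≤ a) :
    p * (a + 1) ^ (p - 1) ≤ (a + 1) ^ p - a ^ p := by
  obtain ⟨c, hc, hslope⟩ := exists_hasDerivAt_eq_slope (fun x => x ^ p)
      (fun x => p * x ^ (p - 1)) (by linarith : a < a + 1)
      (fun x _ => (Real.continuousAt_rpow_const x p (Or.inr hp.le)).continuousWithinAt)
      (fun x hx => Real.hasDerivAt_rpow_const (Or.inl (ne_of_gt (lt_of_le_of_lt ha hx.1))))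
  have hc0 : 0 < c := lt_of_le_of_lt ha hc.1
  have h1 : (a + 1) ^ (p - 1) ≤ c ^ (p - 1) :=
    Real.rpow_le_rpow_of_nonpos hc0 hc.2.le (by linarith)
  have h2 : p * (a + 1) ^ (p - 1) ≤ p * c ^ (p - 1) :=
    mul_le_mul_of_nonneg_left h1 hp.le
  have h3 : p * c ^ (p - 1) = (a + 1) ^ p - a ^ p := by
    have := hslope
    simp only [add_sub_cancel_left, div_one] at this
    exact this
  linarith

/-- MVT-type bound for negative exponents: `(-p) * (a+1)^(p-1) ≤ a^p - (a+1)^p`. -/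
lemma rpow_mvt_neg {p : ℝ} (hp : p < 0) {a : ℝ} (ha : 1 ≤ a) :
    (-p) * (a + 1) ^ (p - 1) ≤ a ^ p - (a + 1) ^ p := by
  obtain ⟨c, hc, hslope⟩ := exists_hasDerivAt_eq_slope (fun x => x ^ p)
      (fun x => p * x ^ (p - 1)) (by linarith : a < a + 1)
      (fun x hx => (Real.continuousAt_rpow_const x p
        (Or.inl (by
          have : (1:ℝ) ≤ x := le_trans ha hx.1
          linarith))).continuousWithinAt)
      (fun x hx => Real.hasDerivAt_rpow_const (Or.inl (by
        have : (1:ℝ) ≤ x := le_trans ha hx.1.le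
        linarith)))
  have hc0 : 0 < c := lt_of_lt_of_le (by linarith : (0:ℝ) < a) hc.1.le
  have h1 : (a + 1) ^ (p - 1) ≤ c ^ (p - 1) :=
    Real.rpow_le_rpow_of_nonpos hc0 hc.2.le (by linarith)
  have h2 : (-p) * (a + 1) ^ (p - 1) ≤ (-p) * c ^ (p - 1) :=
    mul_le_mul_of_nonneg_left h1 (by linarith)
  have h3 : p * c ^ (p - 1) = (a + 1) ^ p - a ^ p := by
    have := hslope
    simp only [add_sub_cancel_left, div_one] at this
    exact this
  nlinarith [h2, h3]

/-- Partial-sum bound: `∑_{i<J} (i+1)^(v-1) ≤ J^v / v`. -/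
lemma sum_rpow_head_le {v : ℝ} (hv : 0 < v) (hv1 : v ≤ 1) (J : ℕ) :
    ∑ i ∈ Finset.range J, ((i : ℝ) + 1) ^ (v - 1) ≤ (J : ℝ) ^ v / v := by
  have key : ∀ i ∈ Finset.range J,
      ((i : ℝ) + 1) ^ (v - 1) ≤ (((i + 1 : ℕ) : ℝ) ^ v - ((i : ℕ) : ℝ) ^ v) / v := by
    intro i _
    rw [le_div_iff₀ hv]
    have h := rpow_mvt_pos hv hv1 (a := (i : ℝ)) (Nat.cast_nonneg i)
    push_cast
    nlinarith [h]
  calc ∑ i ∈ Finset.range J, ((i : ℝ) + 1) ^ (v - 1)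
      ≤ ∑ i ∈ Finset.range J, (((i + 1 : ℕ) : ℝ) ^ v - ((i : ℕ) : ℝ) ^ v) / v :=
        Finset.sum_le_sum key
    _ = (∑ i ∈ Finset.range J, (((i + 1 : ℕ) : ℝ) ^ v - ((i : ℕ) : ℝ) ^ v)) / v := by
        rw [Finset.sum_div]
    _ = ((J : ℝ) ^ v - ((0 : ℕ) : ℝ) ^ v) / v := by
        rw [Finset.sum_range_sub (fun n : ℕ => ((n : ℕ) : ℝ) ^ v)]
    _ = (J : ℝ) ^ v / v := by
        norm_num [Real.zero_rpow (ne_of_gt hv)]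

/-- Tail bound: for `s < -1` and `2 ≤ N`,
`∑_{k ≥ N} k^s ≤ (N-1)^(s+1) / (-(s+1))`. -/
lemma tsum_rpow_tail_le {s : ℝ} (hs : s < -1) {N : ℕ} (hN : 2 ≤ N) :
    ∑' k : ℕ, (if N ≤ k then (k : ℝ) ^ s else 0) ≤ ((N : ℝ) - 1) ^ (s + 1) / (-(s + 1)) := by
  have hnn : ∀ k : ℕ, 0 ≤ if N ≤ k then (k : ℝ) ^ s else 0 := by
    intro k; split
    · exact Real.rpow_nonneg (Nat.cast_nonneg k) s
    · exact le_refl 0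
  have hsummable : Summable (fun k : ℕ => if N ≤ k then (k : ℝ) ^ s else 0) := by
    apply Summable.of_nonneg_of_le hnn (fun k => ?_) (Real.summable_nat_rpow.mpr hs)
    split
    · exact le_refl _
    · exact Real.rpow_nonneg (Nat.cast_nonneg k) s
  apply Summable.tsum_le_of_sum_le hsummable
  intro t
  set M := t.sup id with hM
  set G : ℕ → ℝ := fun k => ((k : ℝ) - 1) ^ (s + 1) with hG
  have hGnn : ∀ k : ℕ, 1 ≤ k → 0 ≤ G k := by
    intro k hk
    apply Real.rpow_nonneg
    have : (1 : ℝ) ≤ (k : ℝ) := by exact_mod_cast hk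
    linarith
  have step1 : ∑ k ∈ t, (if N ≤ k then (k : ℝ) ^ s else 0)
      = ∑ k ∈ t.filter (fun k => N ≤ k), (k : ℝ) ^ s := (Finset.sum_filter _ _).symm
  have hsub : t.filter (fun k => N ≤ k) ⊆ Finset.Ico N (M + 1) := by
    intro k hk
    rw [Finset.mem_filter] at hk
    rw [Finset.mem_Ico]
    exact ⟨hk.2, Nat.lt_succ_of_le (Finset.le_sup (f := id) hk.1)⟩
  have step2 : ∑ k ∈ t.filter (fun k => N ≤ k), (k : ℝ) ^ s
      ≤ ∑ k ∈ Finset.Ico N (M + 1), (k : ℝ) ^ s := by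
    apply Finset.sum_le_sum_of_subset_of_nonneg hsub
    intro k _ _
    exact Real.rpow_nonneg (Nat.cast_nonneg k) s
  have key : ∀ k ∈ Finset.Ico N (M + 1),
      (k : ℝ) ^ s ≤ (G k - G (k + 1)) / (-(s + 1)) := by
    intro k hk
    rw [Finset.mem_Ico] at hk
    have hk2 : (2 : ℝ) ≤ (k : ℝ) := by exact_mod_cast le_trans hN hk.1
    have h := rpow_mvt_neg (p := s + 1) (by linarith) (a := (k : ℝ) - 1) (by linarith)
    rw [le_div_iff₀ (by linarith : (0:ℝ) < -(s+1))]
    have hsimp : (k : ℝ) - 1 + 1 = (k : ℝ) := by ring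
    rw [hsimp] at h
    have hexp : s + 1 - 1 = s := by ring
    rw [hexp] at h
    have hGk : G k = ((k : ℝ) - 1) ^ (s + 1) := rfl
    have hGk1 : G (k + 1) = (k : ℝ) ^ (s + 1) := by
      rw [hG]; dsimp only; push_cast; ring_nf
    rw [hGk, hGk1]
    nlinarith [h]
  have step3 : ∑ k ∈ Finset.Ico N (M + 1), (k : ℝ) ^ s
      ≤ ∑ k ∈ Finset.Ico N (M + 1), (G k - G (k + 1)) / (-(s + 1)) :=
    Finset.sum_le_sum key
  have htel : ∑ k ∈ Finset.Ico N (M + 1), (G k - G (k + 1))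
      = G N - G (N + (M + 1 - N)) := by
    rw [Finset.sum_Ico_eq_sum_range]
    exact Finset.sum_range_sub' (fun i => G (N + i)) _
  have step4 : ∑ k ∈ Finset.Ico N (M + 1), (G k - G (k + 1)) / (-(s + 1))
      ≤ ((N : ℝ) - 1) ^ (s + 1) / (-(s + 1)) := by
    rw [← Finset.sum_div, htel]
    apply div_le_div_of_nonneg_right ?_ (by linarith : (0:ℝ) ≤ -(s+1))
    have := hGnn (N + (M + 1 - N)) (by omega)
    have hGN : G N = ((N : ℝ) - 1) ^ (s + 1) := rfl
    linarith [hGN ▸ le_refl (G N)]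
  calc ∑ k ∈ t, (if N ≤ k then (k : ℝ) ^ s else 0)
      = ∑ k ∈ t.filter (fun k => N ≤ k), (k : ℝ) ^ s := step1
    _ ≤ ∑ k ∈ Finset.Ico N (M + 1), (k : ℝ) ^ s := step2
    _ ≤ ∑ k ∈ Finset.Ico N (M + 1), (G k - G (k + 1)) / (-(s + 1)) := step3
    _ ≤ ((N : ℝ) - 1) ^ (s + 1) / (-(s + 1)) := step4

/-- Logarithm bound: `log (y t) ≤ (log y / (ε log 2)) t^ε` for `y ≥ 2`, `t ≥ 1`. -/
lemma log_le_rpow_aux {eps y t : ℝ} (heps : 0 < eps) (heps1 : eps ≤ 1)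
    (hy : 2 ≤ y) (ht : 1 ≤ t) :
    Real.log (y * t) ≤ Real.log y / (eps * Real.log 2) * t ^ eps := by
  have hl2 : 0 < Real.log 2 := Real.log_pos one_lt_two
  have hl21 : Real.log 2 ≤ 1 := by
    linarith [Real.log_le_sub_one_of_pos (by norm_num : (0:ℝ) < 2)]
  have hly : Real.log 2 ≤ Real.log y := Real.log_le_log (by norm_num) hy
  have ht0 : 0 < t := by linarith
  have hlt : 0 ≤ Real.log t := Real.log_nonneg ht
  have hT : 1 ≤ t ^ eps := Real.one_le_rpow ht heps.le
  have hkey : eps * Real.log t ≤ t ^ eps - 1 := by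
    have h := Real.log_le_sub_one_of_pos (Real.rpow_pos_of_pos ht0 eps)
    rwa [Real.log_rpow ht0] at h
  rw [Real.log_mul (by linarith) (by linarith)]
  rw [div_mul_eq_mul_div, le_div_iff₀ (by positivity)]
  have hLpos : 0 < Real.log y := lt_of_lt_of_le hl2 hly
  have hA : Real.log y * (eps * Real.log 2) ≤ Real.log y * 1 :=
    mul_le_mul_of_nonneg_left
      (by nlinarith [mul_le_one₀ heps1 hl2.le hl21] : eps * Real.log 2 ≤ 1) hLpos.le
  have hB : (eps * Real.log t) * Real.log 2 ≤ (t ^ eps - 1) * Real.log 2 :=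
    mul_le_mul_of_nonneg_right hkey hl2.le
  have hC : (t ^ eps - 1) * Real.log 2 ≤ (t ^ eps - 1) * Real.log y :=
    mul_le_mul_of_nonneg_left hly (by linarith)
  nlinarith [hA, hB, hC]

set_option maxHeartbeats 2000000 in
theorem log_weighted_sum_bound_shift (mu nu : ℝ) (hmu : 0 < mu) (hnu : 0 < nu)
    (hsum : nu < 1 - mu) :
    ∃ C : ℝ, 0 < C ∧ ∀ y : ℝ, 2 ≤ y →
      (∑' k : ℕ, if 1 + y ≤ (k : ℝ) then
          Real.log k * (k : ℝ) ^ (mu - 1) * ((k : ℝ) - y) ^ (nu - 1) else 0)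
        ≤ C * Real.log y / y ^ (1 - mu - nu) := by
  have hε : 0 < (1 - mu - nu) / 2 := by linarith
  set ε := (1 - mu - nu) / 2 with hεdef
  have hε1 : ε ≤ 1 := by rw [hεdef]; linarith
  have hl2 : 0 < Real.log 2 := Real.log_pos one_lt_two
  set CL : ℝ := 2 / (ε * Real.log 2) with hCLdef
  set CE : ℝ := 2 ^ (1 - nu) / (ε * Real.log 2) with hCEdef
  have hCL : 0 < CL := div_pos two_pos (mul_pos hε hl2)
  have hCE : 0 < CE := div_pos (Real.rpow_pos_of_pos two_pos _) (mul_pos hε hl2)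
  refine ⟨2 * CL / nu + CE / ε,
    add_pos (div_pos (by linarith) hnu) (div_pos hCE hε), ?_⟩
  intro y hy
  have hy0 : (0:ℝ) < y := by linarith
  have hy1 : (1:ℝ) < y := by linarith
  have hly : 0 < Real.log y := Real.log_pos hy1
  set n0 := Nat.ceil y with hn0def
  set n1 := Nat.floor (2 * y) with hn1def
  have hn0y : y ≤ (n0:ℝ) := Nat.le_ceil y
  have h2y0 : (0:ℝ) ≤ 2 * y := by linarith
  have hn1le : (n1:ℝ) ≤ 2 * y := Nat.floor_le h2y0
  have hn1gt : 2 * y < (n1:ℝ) + 1 := Nat.lt_floor_add_one (2*y)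
  have hyn1 : y ≤ (n1:ℝ) := by linarith
  have hn1two : 2 ≤ n1 := by exact_mod_cast le_trans hy hyn1
  set s := mu + nu - 2 + ε with hsdef
  have hs1 : s < -1 := by rw [hsdef, hεdef]; linarith
  have hsp1 : s + 1 = -ε := by rw [hsdef, hεdef]; ring
  -- majorant functions
  set g1 : ℕ → ℝ := fun k => if n0 + 1 ≤ k ∧ k ≤ n1 then
      CL * Real.log y * y ^ (mu - 1) * ((k:ℝ) - (n0:ℝ)) ^ (nu - 1) else 0 with hg1def
  set g2 : ℕ → ℝ := fun k => if n1 + 1 ≤ k then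
      CE * Real.log y * y ^ (-ε) * (k:ℝ) ^ s else 0 with hg2def
  have hg1nn : ∀ k, 0 ≤ g1 k := by
    intro k
    rw [hg1def]; dsimp only
    split
    · rename_i h
      have : ((n0:ℝ)) + 1 ≤ (k:ℝ) := by exact_mod_cast h.1
      have hb : (0:ℝ) ≤ (k:ℝ) - (n0:ℝ) := by linarith
      have := Real.rpow_nonneg hb (nu - 1)
      have := Real.rpow_nonneg hy0.le (mu - 1)
      positivity
    · exact le_refl 0
  have hg2nn : ∀ k, 0 ≤ g2 k := by
    intro k
    rw [hg2def]; dsimp only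
    split
    · have := Real.rpow_nonneg (Nat.cast_nonneg k) s
      have := Real.rpow_nonneg hy0.le (-ε)
      positivity
    · exact le_refl 0
  -- pointwise bound
  have hmain : ∀ k : ℕ, (if 1 + y ≤ (k : ℝ) then
      Real.log k * (k : ℝ) ^ (mu - 1) * ((k : ℝ) - y) ^ (nu - 1) else 0) ≤ g1 k + g2 k := by
    intro k
    by_cases hk : 1 + y ≤ (k:ℝ)
    · rw [if_pos hk]
      have hk3 : (3:ℝ) ≤ (k:ℝ) := by linarith
      have hk3' : 3 ≤ k := by exact_mod_cast hk3
      have hk0 : (0:ℝ) < (k:ℝ) := by linarith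
      have hlogk0 : 0 ≤ Real.log k := Real.log_nonneg (by linarith)
      have hkge : n0 + 1 ≤ k := by
        have h1 : n0 ≤ k - 1 := by
          apply Nat.ceil_le.mpr
          have : ((k - 1 : ℕ) : ℝ) = (k:ℝ) - 1 := by
            have : 1 ≤ k := by omega
            push_cast [this]; ring
          rw [this]; linarith
        omega
      have hky1 : 1 ≤ (k:ℝ)/y := by rw [le_div_iff₀ hy0]; linarith
      have hyk : y * ((k:ℝ)/y) = (k:ℝ) := by field_simp
      have hlogk := log_le_rpow_aux hε hε1 hy hky1
      rw [hyk] at hlogk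
      have hkpow : (k:ℝ) ^ (mu-1) ≤ y ^ (mu-1) :=
        Real.rpow_le_rpow_of_nonpos hy0 (by linarith) (by linarith)
      by_cases hk2 : (k:ℝ) ≤ 2*y
      · -- region 1
        have hkn1 : k ≤ n1 := Nat.le_floor hk2
        have hg2z : g2 k = 0 := by
          rw [hg2def]; dsimp only; rw [if_neg]; omega
        have hg1v : g1 k = CL * Real.log y * y ^ (mu - 1) * ((k:ℝ) - (n0:ℝ)) ^ (nu - 1) := by
          rw [hg1def]; dsimp only; rw [if_pos ⟨hkge, hkn1⟩]
        rw [hg1v, hg2z, add_zero]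
        have hpow2 : ((k:ℝ)/y) ^ ε ≤ 2 := by
          calc ((k:ℝ)/y) ^ ε ≤ (2:ℝ) ^ ε :=
                Real.rpow_le_rpow (by positivity) (by rw [div_le_iff₀ hy0]; linarith) hε.le
            _ ≤ (2:ℝ) ^ (1:ℝ) := Real.rpow_le_rpow_of_exponent_le one_le_two hε1
            _ = 2 := Real.rpow_one 2
        have hlogk2 : Real.log k ≤ CL * Real.log y := by
          calc Real.log k ≤ Real.log y / (ε * Real.log 2) * ((k:ℝ)/y) ^ ε := hlogk
            _ ≤ Real.log y / (ε * Real.log 2) * 2 :=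
                mul_le_mul_of_nonneg_left hpow2 (by positivity)
            _ = CL * Real.log y := by rw [hCLdef]; ring
        have hn0k : ((n0:ℝ)) + 1 ≤ (k:ℝ) := by exact_mod_cast hkge
        have hbase : (1:ℝ) ≤ (k:ℝ) - (n0:ℝ) := by linarith
        have h7 : ((k:ℝ) - y) ^ (nu-1) ≤ ((k:ℝ) - (n0:ℝ)) ^ (nu-1) :=
          Real.rpow_le_rpow_of_nonpos (by linarith) (by linarith) (by linarith)
        have hnn1 : 0 ≤ ((k:ℝ) - y) ^ (nu-1) := Real.rpow_nonneg (by linarith) _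
        have hnn2 : 0 ≤ (k:ℝ) ^ (mu-1) := Real.rpow_nonneg hk0.le _
        have hfirst : Real.log k * (k:ℝ) ^ (mu-1) ≤ CL * Real.log y * y ^ (mu-1) := by
          apply mul_le_mul hlogk2 hkpow hnn2 (by positivity)
        apply mul_le_mul hfirst h7 hnn1
        have := Real.rpow_nonneg hy0.le (mu-1)
        positivity
      · -- region 2
        push_neg at hk2
        have hkn1 : n1 + 1 ≤ k := by
          have : n1 < k := (Nat.floor_lt h2y0).mpr hk2
          omega
        have hg1z : g1 k = 0 := by
          rw [hg1def]; dsimp only; rw [if_neg]; rintro ⟨_, h2⟩; omega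
        have hg2v : g2 k = CE * Real.log y * y ^ (-ε) * (k:ℝ) ^ s := by
          rw [hg2def]; dsimp only; rw [if_pos hkn1]
        rw [hg1z, hg2v, zero_add]
        have hsplit : ((k:ℝ)/y) ^ ε = (k:ℝ) ^ ε * y ^ (-ε) := by
          rw [Real.div_rpow hk0.le hy0.le, Real.rpow_neg hy0.le, div_eq_mul_inv]
        have h8 : ((k:ℝ) - y) ^ (nu-1) ≤ 2 ^ (1-nu) * (k:ℝ) ^ (nu-1) := by
          have hhalf : (0:ℝ) < (k:ℝ)/2 := by linarith
          have hstep : ((k:ℝ) - y) ^ (nu-1) ≤ ((k:ℝ)/2) ^ (nu-1) :=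
            Real.rpow_le_rpow_of_nonpos hhalf (by linarith) (by linarith)
          refine hstep.trans_eq ?_
          rw [Real.div_rpow hk0.le (by norm_num : (0:ℝ) ≤ 2), div_eq_mul_inv,
            ← Real.rpow_neg (by norm_num : (0:ℝ) ≤ 2), show -(nu-1) = 1-nu by ring]
          ring
        have hnn1 : 0 ≤ ((k:ℝ) - y) ^ (nu-1) := Real.rpow_nonneg (by linarith) _
        have hnn2 : 0 ≤ (k:ℝ) ^ (mu-1) := Real.rpow_nonneg hk0.le _
        have hnn3 : 0 ≤ Real.log y / (ε * Real.log 2) * ((k:ℝ)/y) ^ ε := by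
          have := Real.rpow_nonneg (by positivity : (0:ℝ) ≤ (k:ℝ)/y) ε
          positivity
        have hfirst : Real.log k * (k:ℝ) ^ (mu-1)
            ≤ (Real.log y / (ε * Real.log 2) * ((k:ℝ)/y) ^ ε) * (k:ℝ) ^ (mu-1) :=
          mul_le_mul_of_nonneg_right hlogk hnn2
        have hsecond : Real.log k * (k:ℝ) ^ (mu-1) * ((k:ℝ) - y) ^ (nu-1)
            ≤ (Real.log y / (ε * Real.log 2) * ((k:ℝ)/y) ^ ε) * (k:ℝ) ^ (mu-1)
              * (2 ^ (1-nu) * (k:ℝ) ^ (nu-1)) := by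
          apply mul_le_mul hfirst h8 hnn1
          positivity
        refine hsecond.trans_eq ?_
        rw [hsplit, hCEdef, hsdef, show mu + nu - 2 + ε = ε + (mu-1) + (nu-1) by ring,
          Real.rpow_add hk0, Real.rpow_add hk0]
        ring
    · rw [if_neg hk]
      exact add_nonneg (hg1nn k) (hg2nn k)
  have hfnn : ∀ k : ℕ, 0 ≤ (if 1 + y ≤ (k : ℝ) then
      Real.log k * (k : ℝ) ^ (mu - 1) * ((k : ℝ) - y) ^ (nu - 1) else 0) := by
    intro k
    split
    · rename_i h
      have hk0 : (0:ℝ) ≤ (k:ℝ) := Nat.cast_nonneg k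
      have h1 : 0 ≤ Real.log k := Real.log_nonneg (by linarith)
      have h2 : 0 ≤ (k:ℝ) ^ (mu-1) := Real.rpow_nonneg hk0 _
      have h3 : 0 ≤ ((k:ℝ) - y) ^ (nu-1) := Real.rpow_nonneg (by linarith) _
      positivity
    · exact le_refl 0
  -- summability
  have hg1sum : Summable g1 := by
    apply summable_of_ne_finset_zero (s := Finset.range (n1+1))
    intro b hb
    rw [Finset.mem_range] at hb
    rw [hg1def]; dsimp only; rw [if_neg]
    rintro ⟨_, h2⟩; omega
  have hg2sum : Summable g2 := by
    apply Summable.of_nonneg_of_le hg2nn (fun k => ?_)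
      ((Real.summable_nat_rpow.mpr hs1).mul_left (CE * Real.log y * y ^ (-ε)))
    rw [hg2def]; dsimp only
    split
    · exact le_refl _
    · have h1 := Real.rpow_nonneg (Nat.cast_nonneg k) s
      have h2 := Real.rpow_nonneg hy0.le (-ε)
      positivity
  have hfsum : Summable (fun k : ℕ => if 1 + y ≤ (k : ℝ) then
      Real.log k * (k : ℝ) ^ (mu - 1) * ((k : ℝ) - y) ^ (nu - 1) else 0) :=
    Summable.of_nonneg_of_le hfnn hmain (hg1sum.add hg2sum)
  -- bound on tsum g1
  have ht1 : ∑' k, g1 k = CL * Real.log y * y ^ (mu-1) *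
      ∑ k ∈ Finset.Ico (n0+1) (n1+1), ((k:ℝ) - (n0:ℝ)) ^ (nu - 1) := by
    rw [tsum_eq_sum (s := Finset.Ico (n0+1) (n1+1)) ?_]
    · rw [Finset.mul_sum]
      apply Finset.sum_congr rfl
      intro k hk
      rw [Finset.mem_Ico] at hk
      rw [hg1def]; dsimp only; rw [if_pos ⟨hk.1, by omega⟩]
    · intro b hb
      rw [Finset.mem_Ico] at hb
      rw [hg1def]; dsimp only; rw [if_neg]
      rintro ⟨h1, h2⟩; omega
  have ht1b : ∑ k ∈ Finset.Ico (n0+1) (n1+1), ((k:ℝ) - (n0:ℝ)) ^ (nu - 1)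
      ≤ 2 * y ^ nu / nu := by
    rw [Finset.sum_Ico_eq_sum_range]
    have hcongr : ∀ i ∈ Finset.range (n1+1-(n0+1)),
        (((n0+1+i : ℕ):ℝ) - (n0:ℝ)) ^ (nu-1) = ((i:ℝ) + 1) ^ (nu-1) := by
      intro i _
      congr 1
      push_cast
      ring
    rw [Finset.sum_congr rfl hcongr]
    refine (sum_rpow_head_le hnu (by linarith) (n1+1-(n0+1))).trans ?_
    have hJ : ((n1+1-(n0+1) : ℕ):ℝ) ≤ 2*y := by
      have h1 : (n1+1-(n0+1) : ℕ) ≤ n1 := by omega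
      calc ((n1+1-(n0+1) : ℕ):ℝ) ≤ (n1:ℝ) := by exact_mod_cast h1
        _ ≤ 2*y := hn1le
    have h2 : ((n1+1-(n0+1) : ℕ):ℝ) ^ nu ≤ (2*y) ^ nu :=
      Real.rpow_le_rpow (Nat.cast_nonneg _) hJ hnu.le
    have h3 : (2*y) ^ nu = 2 ^ nu * y ^ nu := Real.mul_rpow (by norm_num) hy0.le
    have h4 : (2:ℝ) ^ nu ≤ 2 := by
      calc (2:ℝ) ^ nu ≤ (2:ℝ) ^ (1:ℝ) :=
            Real.rpow_le_rpow_of_exponent_le one_le_two (by linarith)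
        _ = 2 := Real.rpow_one 2
    have h5 : 0 ≤ y ^ nu := Real.rpow_nonneg hy0.le nu
    apply div_le_div_of_nonneg_right ?_ hnu.le
    nlinarith [h2, h3, h4, h5]
  have hB1 : ∑' k, g1 k ≤ (2 * CL / nu) * Real.log y * y ^ (mu+nu-1) := by
    rw [ht1]
    have hc : 0 ≤ CL * Real.log y * y ^ (mu-1) := by
      have := Real.rpow_nonneg hy0.le (mu-1)
      positivity
    calc CL * Real.log y * y ^ (mu-1) *
        ∑ k ∈ Finset.Ico (n0+1) (n1+1), ((k:ℝ) - (n0:ℝ)) ^ (nu - 1)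
        ≤ CL * Real.log y * y ^ (mu-1) * (2 * y ^ nu / nu) :=
          mul_le_mul_of_nonneg_left ht1b hc
      _ = (2 * CL / nu) * Real.log y * y ^ (mu+nu-1) := by
          rw [show mu+nu-1 = (mu-1) + nu by ring, Real.rpow_add hy0]
          ring
  -- bound on tsum g2
  have ht2 : ∑' k, g2 k = CE * Real.log y * y ^ (-ε) *
      ∑' k : ℕ, (if n1 + 1 ≤ k then (k:ℝ) ^ s else 0) := by
    rw [← tsum_mul_left]
    apply tsum_congr
    intro k
    rw [hg2def]; dsimp only
    rw [mul_ite, mul_zero]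
  have htail := tsum_rpow_tail_le hs1 (N := n1+1) (by omega)
  have hcast : (((n1+1 : ℕ)):ℝ) - 1 = (n1:ℝ) := by push_cast; ring
  rw [hcast] at htail
  have hn1pow : ((n1:ℝ)) ^ (s+1) ≤ y ^ (s+1) :=
    Real.rpow_le_rpow_of_nonpos hy0 hyn1 (by rw [hsp1]; linarith)
  have htail2 : ∑' k : ℕ, (if n1 + 1 ≤ k then (k:ℝ) ^ s else 0) ≤ y ^ (s+1) / ε := by
    refine htail.trans ?_
    rw [show -(s+1) = ε by rw [hsp1]; ring]
    exact div_le_div_of_nonneg_right hn1pow hε.le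
  have hB2 : ∑' k, g2 k ≤ (CE / ε) * Real.log y * y ^ (mu+nu-1) := by
    rw [ht2]
    have hc : 0 ≤ CE * Real.log y * y ^ (-ε) := by
      have := Real.rpow_nonneg hy0.le (-ε)
      positivity
    calc CE * Real.log y * y ^ (-ε) * ∑' k : ℕ, (if n1 + 1 ≤ k then (k:ℝ) ^ s else 0)
        ≤ CE * Real.log y * y ^ (-ε) * (y ^ (s+1) / ε) :=
          mul_le_mul_of_nonneg_left htail2 hc
      _ = (CE / ε) * Real.log y * y ^ (mu+nu-1) := by
          rw [hsp1, show mu+nu-1 = -ε + -ε by rw [hεdef]; ring, Real.rpow_add hy0]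
          ring
  -- put everything together
  have hRHS : (2 * CL / nu + CE / ε) * Real.log y / y ^ (1 - mu - nu)
      = (2 * CL / nu) * Real.log y * y ^ (mu+nu-1) + (CE / ε) * Real.log y * y ^ (mu+nu-1) := by
    rw [show mu+nu-1 = -(1-mu-nu) by ring, Real.rpow_neg hy0.le, div_eq_mul_inv]
    ring
  calc (∑' k : ℕ, if 1 + y ≤ (k : ℝ) then
          Real.log k * (k : ℝ) ^ (mu - 1) * ((k : ℝ) - y) ^ (nu - 1) else 0)
      ≤ ∑' k, (g1 k + g2 k) := Summable.tsum_le_tsum hmain hfsum (hg1sum.add hg2sum)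
    _ = ∑' k, g1 k + ∑' k, g2 k := Summable.tsum_add hg1sum hg2sum
    _ ≤ (2 * CL / nu) * Real.log y * y ^ (mu+nu-1) + (CE / ε) * Real.log y * y ^ (mu+nu-1) :=
        add_le_add hB1 hB2
    _ = (2 * CL / nu + CE / ε) * Real.log y / y ^ (1 - mu - nu) := hRHS.symm
end

section
/- For integers N ≥ 2 and real d with 0 < d < 1/4, and for h ∈ {-1,1}, the sum ∑_{z=1}^{N-1} 1/(|z + hN|^{1-2d} z^{1-2d}) + ∑_{z=1}^{N-1} 1/(|{-z} + hN|^{1-2d} z^{1-2d}) is bounded by C N^{4d-1} for a constant C depending only on d. -/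
open Real Finset

/-! With `e = 1 - 2d ∈ (0, 1)`, the two sums are `∑ ((z + N)^e z^e)⁻¹` and `∑ ((N - z)^e z^e)⁻¹`
(in one order or the other, according to `h`). Both are compared with `N^{-e} ∑_{z < N} z^{-e}`,
which is `O(N^{1 - 2e})` by comparing `z^{-e}` with the increments of `z^{1-e}`. In the first sum
`z + N ≥ N`; in the second one, `(1/a + 1/b)^e ≤ a^{-e} + b^{-e}` with `a + b = N` splits the
term, and the reflection `z ↦ N - z` folds the two halves together. -/

theorem rpow_sub_one_add_mul_rpow_sub_one_le {p t : ℝ} (hp0 : 0 ≤ p) (hp1 : p ≤ 1) (ht : 1 ≤ t) :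
    (t - 1) ^ p + p * t ^ (p - 1) ≤ t ^ p := by
  have ht0 : 0 < t := by linarith
  have hs : -1 ≤ -t⁻¹ := neg_le_neg (inv_le_one_of_one_le₀ ht)
  have hbern := rpow_one_add_le_one_add_mul_self hs hp0 hp1
  have hsplit : t - 1 = t * (1 + -t⁻¹) := by field_simp; ring
  calc (t - 1) ^ p + p * t ^ (p - 1)
      = t ^ p * (1 + -t⁻¹) ^ p + t ^ p * (p * t⁻¹) := by
        rw [hsplit, mul_rpow ht0.le (by linarith [inv_le_one_of_one_le₀ ht]), rpow_sub_one ht0.ne']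
        ring
    _ ≤ t ^ p * (1 + p * -t⁻¹) + t ^ p * (p * t⁻¹) := by gcongr
    _ = t ^ p := by ring

theorem one_sub_mul_sum_Icc_inv_rpow_le {e : ℝ} (he0 : 0 ≤ e) (he1 : e ≤ 1) (M : ℕ) :
    (1 - e) * ∑ z ∈ Icc 1 M, ((z : ℝ) ^ e)⁻¹ ≤ (M : ℝ) ^ (1 - e) := by
  induction M with
  | zero => simp [zero_rpow_nonneg]
  | succ M ih =>
    have hstep := rpow_sub_one_add_mul_rpow_sub_one_le (p := 1 - e) (t := (M : ℝ) + 1)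
      (by linarith) (by linarith) (by simp)
    have hpow : ((M : ℝ) + 1) ^ (1 - e - 1) = (((M : ℝ) + 1) ^ e)⁻¹ := by
      rw [show 1 - e - 1 = -e by ring, rpow_neg (by positivity)]
    rw [sum_Icc_succ_top (by omega), mul_add]
    push_cast
    rw [add_sub_cancel_right, hpow] at hstep
    linarith

theorem inv_rpow_mul_rpow_le {a b e : ℝ} (ha : 0 < a) (hb : 0 < b) (he0 : 0 ≤ e) (he1 : e ≤ 1) :
    (a ^ e * b ^ e)⁻¹ ≤ ((a + b) ^ e)⁻¹ * ((a ^ e)⁻¹ + (b ^ e)⁻¹) := by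
  have hsub : (a⁻¹ + b⁻¹) ^ e ≤ a⁻¹ ^ e + b⁻¹ ^ e :=
    rpow_add_le_add_rpow (by positivity) (by positivity) he0 he1
  have hsum : a⁻¹ + b⁻¹ = (a + b) / (a * b) := by field_simp; ring
  rw [hsum, div_rpow (by positivity) (by positivity), mul_rpow ha.le hb.le,
    inv_rpow ha.le, inv_rpow hb.le] at hsub
  calc (a ^ e * b ^ e)⁻¹ = ((a + b) ^ e)⁻¹ * ((a + b) ^ e / (a ^ e * b ^ e)) := by
        field_simp
    _ ≤ ((a + b) ^ e)⁻¹ * ((a ^ e)⁻¹ + (b ^ e)⁻¹) := by gcongr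

theorem sum_Icc_sub_reflect (f : ℝ → ℝ) (N : ℕ) :
    ∑ z ∈ Icc 1 (N - 1), f ((N : ℝ) - z) = ∑ z ∈ Icc 1 (N - 1), f z := by
  refine sum_nbij' (N - ·) (N - ·) ?_ ?_ ?_ ?_ ?_ <;> intro z hz <;>
    simp only [mem_Icc] at hz ⊢
  any_goals omega
  rw [Nat.cast_sub (by omega)]

theorem one_sub_mul_sum_Icc_pred_inv_rpow_le {e : ℝ} (he0 : 0 ≤ e) (he1 : e ≤ 1) (N : ℕ) :
    (1 - e) * ∑ z ∈ Icc 1 (N - 1), ((z : ℝ) ^ e)⁻¹ ≤ (N : ℝ) ^ (1 - e) :=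
  (one_sub_mul_sum_Icc_inv_rpow_le he0 he1 _).trans <|
    rpow_le_rpow (by positivity) (by exact_mod_cast N.sub_le 1) (by linarith)

theorem inv_rpow_mul_rpow_one_sub {x : ℝ} (hx : 0 < x) (e : ℝ) :
    (x ^ e)⁻¹ * x ^ (1 - e) = x ^ (1 - 2 * e) := by
  rw [← rpow_neg hx.le, ← rpow_add hx]
  ring_nf

theorem one_sub_mul_sum_Icc_inv_rpow_add_mul_rpow_le {e : ℝ} (he0 : 0 ≤ e) (he1 : e ≤ 1)
    (N : ℕ) :
    (1 - e) * ∑ z ∈ Icc 1 (N - 1), (((z : ℝ) + N) ^ e * (z : ℝ) ^ e)⁻¹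
      ≤ (N : ℝ) ^ (1 - 2 * e) := by
  rcases N.eq_zero_or_pos with rfl | hN
  · simpa using rpow_nonneg le_rfl _
  have hN' : (0 : ℝ) < N := by exact_mod_cast hN
  have he : 0 ≤ 1 - e := by linarith
  calc (1 - e) * ∑ z ∈ Icc 1 (N - 1), (((z : ℝ) + N) ^ e * (z : ℝ) ^ e)⁻¹
      ≤ (1 - e) * ∑ z ∈ Icc 1 (N - 1), ((N : ℝ) ^ e)⁻¹ * ((z : ℝ) ^ e)⁻¹ := by
        gcongr with z hz
        have hz : (1 : ℝ) ≤ z := by exact_mod_cast (mem_Icc.1 hz).1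
        rw [mul_inv]
        gcongr
        linarith
    _ = ((N : ℝ) ^ e)⁻¹ * ((1 - e) * ∑ z ∈ Icc 1 (N - 1), ((z : ℝ) ^ e)⁻¹) := by
        rw [← mul_sum]; ring
    _ ≤ ((N : ℝ) ^ e)⁻¹ * (N : ℝ) ^ (1 - e) := by
        gcongr; exact one_sub_mul_sum_Icc_pred_inv_rpow_le he0 he1 N
    _ = (N : ℝ) ^ (1 - 2 * e) := inv_rpow_mul_rpow_one_sub hN' e

theorem one_sub_mul_sum_Icc_inv_rpow_sub_mul_rpow_le {e : ℝ} (he0 : 0 ≤ e) (he1 : e ≤ 1)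
    (N : ℕ) :
    (1 - e) * ∑ z ∈ Icc 1 (N - 1), (((N : ℝ) - z) ^ e * (z : ℝ) ^ e)⁻¹
      ≤ 2 * (N : ℝ) ^ (1 - 2 * e) := by
  rcases N.eq_zero_or_pos with rfl | hN
  · simpa using rpow_nonneg le_rfl _
  have hN' : (0 : ℝ) < N := by exact_mod_cast hN
  have he : 0 ≤ 1 - e := by linarith
  calc (1 - e) * ∑ z ∈ Icc 1 (N - 1), (((N : ℝ) - z) ^ e * (z : ℝ) ^ e)⁻¹
      ≤ (1 - e) * ∑ z ∈ Icc 1 (N - 1),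
          ((N : ℝ) ^ e)⁻¹ * ((((N : ℝ) - z) ^ e)⁻¹ + ((z : ℝ) ^ e)⁻¹) := by
        gcongr with z hz
        have hz1 : (1 : ℝ) ≤ z := by exact_mod_cast (mem_Icc.1 hz).1
        have hzN : (z : ℝ) + 1 ≤ N := by exact_mod_cast (by grind : z + 1 ≤ N)
        simpa using inv_rpow_mul_rpow_le (a := (N : ℝ) - z) (b := z) (by linarith)
          (by linarith) he0 he1
    _ = ((N : ℝ) ^ e)⁻¹ * (2 * ((1 - e) * ∑ z ∈ Icc 1 (N - 1), ((z : ℝ) ^ e)⁻¹)) := by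
        rw [← mul_sum, sum_add_distrib, sum_Icc_sub_reflect (fun x => (x ^ e)⁻¹)]; ring
    _ ≤ ((N : ℝ) ^ e)⁻¹ * (2 * (N : ℝ) ^ (1 - e)) := by
        gcongr; exact one_sub_mul_sum_Icc_pred_inv_rpow_le he0 he1 N
    _ = 2 * (N : ℝ) ^ (1 - 2 * e) := by
        rw [← inv_rpow_mul_rpow_one_sub hN' e]; ring

theorem abs_add_mul_add_abs_neg_add_mul {h : ℤ} (hh : h ∈ ({-1, 1} : Set ℤ)) (f : ℝ → ℝ)
    {x y : ℝ} (hx : 0 ≤ x) (hxy : x ≤ y) :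
    f |x + h * y| + f |-x + h * y| = f (x + y) + f (y - x) := by
  have hsub : |y - x| = y - x := abs_of_nonneg (by linarith)
  have hadd : |x + y| = x + y := abs_of_nonneg (by linarith)
  obtain rfl | rfl := hh
  · rw [← abs_neg, ← abs_neg (-x + _)]
    push_cast
    rw [show -(x + -1 * y) = y - x by ring, show -(-x + -1 * y) = x + y by ring, hsub, hadd,
      add_comm]
  · push_cast
    rw [one_mul, neg_add_eq_sub, hsub, hadd]

theorem shifted_convolution_sum_bound (d : ℝ) (hd0 : 0 < d) (hd : d < 1 / 4) :
    ∃ C : ℝ, 0 < C ∧ ∀ N : ℕ, 2 ≤ N → ∀ h : ℤ, h ∈ ({-1, 1} : Set ℤ) →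
      (∑ z ∈ Finset.Icc 1 (N - 1),
            1 / (|(z : ℝ) + h * N| ^ (1 - 2 * d) * (z : ℝ) ^ (1 - 2 * d)))
        + (∑ z ∈ Finset.Icc 1 (N - 1),
            1 / (|-(z : ℝ) + h * N| ^ (1 - 2 * d) * (z : ℝ) ^ (1 - 2 * d)))
        ≤ C * (N : ℝ) ^ (4 * d - 1) := by
  refine ⟨3 / (2 * d), by positivity, fun N _ h hh => ?_⟩
  have hterm : ∀ z ∈ Icc 1 (N - 1),
      1 / (|(z : ℝ) + h * N| ^ (1 - 2 * d) * (z : ℝ) ^ (1 - 2 * d))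
        + 1 / (|-(z : ℝ) + h * N| ^ (1 - 2 * d) * (z : ℝ) ^ (1 - 2 * d))
      = (((z : ℝ) + N) ^ (1 - 2 * d) * (z : ℝ) ^ (1 - 2 * d))⁻¹
        + (((N : ℝ) - z) ^ (1 - 2 * d) * (z : ℝ) ^ (1 - 2 * d))⁻¹ := by
    intro z hz
    simpa only [one_div] using abs_add_mul_add_abs_neg_add_mul hh
      (fun t => 1 / (t ^ (1 - 2 * d) * (z : ℝ) ^ (1 - 2 * d))) (Nat.cast_nonneg z)
      (by exact_mod_cast (mem_Icc.1 hz).2.trans (N.sub_le 1))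
  have htail := one_sub_mul_sum_Icc_inv_rpow_add_mul_rpow_le (e := 1 - 2 * d)
    (by linarith) (by linarith) N
  have hconv := one_sub_mul_sum_Icc_inv_rpow_sub_mul_rpow_le (e := 1 - 2 * d)
    (by linarith) (by linarith) N
  rw [show 1 - (1 - 2 * d) = 2 * d by ring, show 1 - 2 * (1 - 2 * d) = 4 * d - 1 by ring]
    at htail hconv
  rw [← sum_add_distrib, sum_congr rfl hterm, sum_add_distrib, div_mul_eq_mul_div,
    le_div_iff₀ (by positivity)]
  linarith
end

section
/- Let 0 < d < 1/4 and ψ_l ≤ C l^{d-1} for l ≥ 1, ψ_0 ≤ C. Then for N ≥ 2, the sum over l, m, n, o ≥ 0 with |l-m| ≥ N, |n-o| ≥ N and l - m + n - o = 0 of ψ_l ψ_m ψ_n ψ_o is bounded by C' N^{4d-1} for a constant C' depending only on C and d. -/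
/-!
Writing `k = l - m = o - n`, the sum is `2 ∑_{k ≥ N} G(k)²` with `G(k) = ∑ₘ ψₘ ψₘ₊ₖ`.
Since `ψₘ ≤ 2C (m + 1)^(d-1)` for every `m`, splitting `G(k)` at `m = k` and comparing both
pieces with integrals of `x^(d-1)` and `x^(2d-2)` gives `G(k) ≤ A k^(2d-1)`. As `4d - 2 < -1`,
the integral test bounds `∑_{k ≥ N} k^(4d-2)` by a multiple of `N^(4d-1)`.
The sums are taken in `ℝ≥0∞`, where reindexing and Fubini need no summability.
-/

open Real Set
open scoped ENNReal

section RpowSums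

variable {r : ℝ}

lemma add_one_rpow_le_div (hr : -1 < r) (hr0 : r ≤ 0) {x : ℝ} (hx : 0 ≤ x) :
    (x + 1) ^ r ≤ ((x + 1) ^ (r + 1) - x ^ (r + 1)) / (r + 1) := by
  calc (x + 1) ^ r = ∫ _ in x..x + 1, (x + 1) ^ r := by simp
    _ ≤ ∫ t in x..x + 1, t ^ r :=
      intervalIntegral.integral_mono_on_of_le_Ioo (by linarith) intervalIntegrable_const
        (intervalIntegral.intervalIntegrable_rpow' hr)
        fun t ht ↦ rpow_le_rpow_of_nonpos (hx.trans_lt ht.1) ht.2.le hr0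
    _ = _ := integral_rpow (Or.inl hr)

lemma sum_range_add_one_rpow_le (hr : -1 < r) (hr0 : r ≤ 0) (k : ℕ) :
    ∑ i ∈ Finset.range k, ((i : ℝ) + 1) ^ r ≤ (k : ℝ) ^ (r + 1) / (r + 1) := by
  have telescope := Finset.sum_range_sub (fun i : ℕ ↦ (i : ℝ) ^ (r + 1) / (r + 1)) k
  simp only [Nat.cast_succ, CharP.cast_eq_zero, zero_rpow (by linarith : r + 1 ≠ 0),
    zero_div, sub_zero] at telescope
  rw [← telescope]
  gcongr with i
  rw [← sub_div]
  exact add_one_rpow_le_div hr hr0 i.cast_nonneg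

lemma tsum_ofReal_add_rpow_le (hr : r < -1) {M : ℕ} (hM : 0 < M) :
    ∑' n : ℕ, ENNReal.ofReal (((n : ℝ) + M) ^ r)
      ≤ ENNReal.ofReal ((1 + 1 / -(r + 1)) * (M : ℝ) ^ (r + 1)) := by
  have hM0 : (0 : ℝ) < M := by exact_mod_cast hM
  have summable : Summable fun n : ℕ ↦ ((n : ℝ) + M) ^ r := by
    simpa using (summable_nat_add_iff M).mpr (Real.summable_nat_rpow.mpr hr)
  have anti : AntitoneOn (fun x : ℝ ↦ x ^ r) (Ici (M : ℝ)) :=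
    (antitoneOn_rpow_Ioi_of_exponent_nonpos (by linarith)).mono (Ici_subset_Ioi.mpr hM0)
  have integral_test := anti.tsum_comp_add_le_integral M (integrableOn_Ioi_rpow_of_lt hr hM0)
    fun t ht ↦ (rpow_pos_of_pos (hM0.trans ht) r).le
  rw [integral_Ioi_rpow_of_lt hr hM0] at integral_test
  have first : (M : ℝ) ^ r ≤ (M : ℝ) ^ (r + 1) :=
    rpow_le_rpow_of_exponent_le (by exact_mod_cast hM) (by linarith)
  rw [← ENNReal.ofReal_tsum_of_nonneg (fun n ↦ by positivity) summable]
  refine ENNReal.ofReal_le_ofReal ?_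
  rw [summable.tsum_eq_zero_add]
  push_cast at integral_test ⊢
  calc _ ≤ (M : ℝ) ^ (r + 1) + -(M : ℝ) ^ (r + 1) / (r + 1) := by
        gcongr
        · simpa using first
        · exact le_of_eq_of_le (tsum_congr fun n ↦ by ring_nf) integral_test
    _ = _ := by rw [neg_div, ← div_neg]; ring

lemma rpow_le_two_mul_add_one_rpow (hr : -1 ≤ r) (hr0 : r ≤ 0) {x : ℝ} (hx : 1 ≤ x) :
    x ^ r ≤ 2 * (x + 1) ^ r := by
  have hx0 : 0 < x := by linarith
  have half : (2 : ℝ)⁻¹ ≤ 2 ^ r := by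
    simpa [rpow_neg_one] using rpow_le_rpow_of_exponent_le one_le_two hr
  calc x ^ r = 2 * (2⁻¹ * x ^ r) := by ring
    _ ≤ 2 * (2 ^ r * x ^ r) := by gcongr
    _ = 2 * (2 * x) ^ r := by rw [mul_rpow zero_le_two hx0.le]
    _ ≤ 2 * (x + 1) ^ r := by
        gcongr 2 * ?_
        exact rpow_le_rpow_of_nonpos (by linarith) (by linarith) hr0

end RpowSums

noncomputable def autocorr (ψ : ℕ → ℝ≥0∞) (k : ℕ) : ℝ≥0∞ := ∑' m, ψ m * ψ (m + k)

lemma autocorr_mono {ψ φ : ℕ → ℝ≥0∞} (h : ψ ≤ φ) (k : ℕ) : autocorr ψ k ≤ autocorr φ k :=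
  ENNReal.tsum_le_tsum fun m ↦ mul_le_mul' (h m) (h (m + k))

lemma autocorr_const_mul (c : ℝ≥0∞) (ψ : ℕ → ℝ≥0∞) (k : ℕ) :
    autocorr (fun m ↦ c * ψ m) k = c ^ 2 * autocorr ψ k := by
  rw [autocorr, autocorr, ← ENNReal.tsum_mul_left]
  exact tsum_congr fun m ↦ by ring

lemma autocorr_ofReal_add_one_rpow_le {r : ℝ} (hr : -1 < r) (hr' : 2 * r < -1) {k : ℕ} (hk : 0 < k) :
    autocorr (fun m ↦ ENNReal.ofReal (((m : ℝ) + 1) ^ r)) k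
      ≤ ENNReal.ofReal ((1 / (r + 1) + (1 + 1 / -(2 * r + 1))) * (k : ℝ) ^ (2 * r + 1)) := by
  have hk0 : (0 : ℝ) < k := by exact_mod_cast hk
  have hr0 : r ≤ 0 := by linarith
  have head : ∑ m ∈ Finset.range k, ENNReal.ofReal (((m : ℝ) + 1) ^ r)
        * ENNReal.ofReal ((((m + k : ℕ) : ℝ) + 1) ^ r)
      ≤ ENNReal.ofReal (1 / (r + 1) * (k : ℝ) ^ (2 * r + 1)) := by
    calc _ ≤ ∑ m ∈ Finset.range k, ENNReal.ofReal (((m : ℝ) + 1) ^ r)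
            * ENNReal.ofReal ((k : ℝ) ^ r) := by
          gcongr ∑ m ∈ _, _ * ENNReal.ofReal ?_ with m
          exact rpow_le_rpow_of_nonpos hk0 (by push_cast; linarith [m.cast_nonneg (α := ℝ)]) hr0
      _ = ENNReal.ofReal ((∑ m ∈ Finset.range k, ((m : ℝ) + 1) ^ r) * (k : ℝ) ^ r) := by
          rw [← Finset.sum_mul, ENNReal.ofReal_mul (by positivity),
            ENNReal.ofReal_sum_of_nonneg fun m _ ↦ by positivity]
      _ ≤ ENNReal.ofReal ((k : ℝ) ^ (r + 1) / (r + 1) * (k : ℝ) ^ r) := by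
          gcongr; exact sum_range_add_one_rpow_le hr hr0 k
      _ = _ := by rw [div_mul_eq_mul_div, ← rpow_add hk0]; ring_nf
  have tail : ∑' j, ENNReal.ofReal ((((j + k : ℕ) : ℝ) + 1) ^ r)
        * ENNReal.ofReal ((((j + k + k : ℕ) : ℝ) + 1) ^ r)
      ≤ ENNReal.ofReal ((1 + 1 / -(2 * r + 1)) * (k : ℝ) ^ (2 * r + 1)) := by
    refine le_trans (ENNReal.tsum_le_tsum fun j ↦ ?_) (tsum_ofReal_add_rpow_le hr' hk)
    have hjk : (0 : ℝ) < j + k := by positivity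
    rw [two_mul, rpow_add hjk, ENNReal.ofReal_mul (by positivity)]
    gcongr ENNReal.ofReal ?_ * ENNReal.ofReal ?_ <;>
      exact rpow_le_rpow_of_nonpos hjk (by push_cast; linarith) hr0
  calc autocorr _ k ≤ ENNReal.ofReal (1 / (r + 1) * (k : ℝ) ^ (2 * r + 1))
        + ENNReal.ofReal ((1 + 1 / -(2 * r + 1)) * (k : ℝ) ^ (2 * r + 1)) := by
        rw [autocorr, ← ENNReal.summable.sum_add_tsum_nat_add' (k := k)]
        exact add_le_add head tail
    _ = _ := by
        have hr1 : 0 ≤ 1 / (r + 1) := one_div_nonneg.mpr (by linarith)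
        have hr2 : 0 ≤ 1 + 1 / -(2 * r + 1) := by
          have : 0 ≤ 1 / -(2 * r + 1) := one_div_nonneg.mpr (by linarith)
          linarith
        rw [← ENNReal.ofReal_add (mul_nonneg hr1 (by positivity))
          (mul_nonneg hr2 (by positivity))]
        ring_nf

lemma autocorr_ofReal_le_of_le_rpow {d C : ℝ} (hd0 : 0 < d) (hd : d < 1 / 2) {psi : ℕ → ℝ}
    (hC : 0 ≤ C) (h0 : psi 0 ≤ C) (hbound : ∀ l : ℕ, 1 ≤ l → psi l ≤ C * (l : ℝ) ^ (d - 1))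
    {k : ℕ} (hk : 0 < k) :
    autocorr (fun m ↦ ENNReal.ofReal (psi m)) k
      ≤ ENNReal.ofReal (4 * C ^ 2 * (1 / d + (1 + 1 / (1 - 2 * d))) * (k : ℝ) ^ (2 * d - 1)) := by
  have majorant : ∀ m : ℕ, psi m ≤ 2 * C * ((m : ℝ) + 1) ^ (d - 1) := by
    intro m
    rcases Nat.eq_zero_or_pos m with rfl | hm
    · simpa using h0.trans (by linarith)
    · calc psi m ≤ C * (m : ℝ) ^ (d - 1) := hbound m hm
        _ ≤ C * (2 * ((m : ℝ) + 1) ^ (d - 1)) := by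
          gcongr
          exact rpow_le_two_mul_add_one_rpow (by linarith) (by linarith) (by exact_mod_cast hm)
        _ = _ := by ring
  calc autocorr (fun m ↦ ENNReal.ofReal (psi m)) k
      ≤ autocorr (fun m ↦ ENNReal.ofReal (2 * C) * ENNReal.ofReal (((m : ℝ) + 1) ^ (d - 1))) k :=
        autocorr_mono (fun m ↦ by
          rw [← ENNReal.ofReal_mul (by positivity)]
          exact ENNReal.ofReal_le_ofReal (majorant m)) k
    _ ≤ ENNReal.ofReal (2 * C) ^ 2 * ENNReal.ofReal
          ((1 / (d - 1 + 1) + (1 + 1 / -(2 * (d - 1) + 1))) * (k : ℝ) ^ (2 * (d - 1) + 1)) := by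
        rw [autocorr_const_mul]
        gcongr
        exact autocorr_ofReal_add_one_rpow_le (by linarith) (by linarith) hk
    _ = _ := by
        rw [← ENNReal.ofReal_pow (by positivity), ← ENNReal.ofReal_mul (by positivity)]
        congr 1
        ring_nf

lemma tsum_sq_le_of_le_rpow {G : ℕ → ℝ≥0∞} {A s : ℝ} (hA : 0 ≤ A) (hs : 2 * s < -1)
    (hG : ∀ k, 0 < k → G k ≤ ENNReal.ofReal (A * (k : ℝ) ^ s)) {N : ℕ} (hN : 0 < N) :
    ∑' j, G (N + j) ^ 2
      ≤ ENNReal.ofReal (A ^ 2 * ((1 + 1 / -(2 * s + 1)) * (N : ℝ) ^ (2 * s + 1))) := by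
  calc ∑' j, G (N + j) ^ 2
      ≤ ∑' j : ℕ, ENNReal.ofReal (A ^ 2) * ENNReal.ofReal (((j : ℝ) + N) ^ (2 * s)) := by
        refine ENNReal.tsum_le_tsum fun j ↦ ?_
        have hjN : (0 : ℝ) ≤ j + N := by positivity
        calc G (N + j) ^ 2 ≤ ENNReal.ofReal (A * ((N + j : ℕ) : ℝ) ^ s) ^ 2 := by
              gcongr; exact hG _ (by omega)
          _ = _ := by
              rw [← ENNReal.ofReal_pow (by positivity), ← ENNReal.ofReal_mul (by positivity),
                mul_comm 2 s, rpow_mul hjN, rpow_two]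
              push_cast
              ring_nf
    _ = ENNReal.ofReal (A ^ 2) * ∑' j : ℕ, ENNReal.ofReal (((j : ℝ) + N) ^ (2 * s)) :=
        ENNReal.tsum_mul_left
    _ ≤ _ := by
        rw [ENNReal.ofReal_mul (by positivity)]
        gcongr
        exact tsum_ofReal_add_rpow_le hs hN

/-- `(s, j, m, n)` is the quadruple with `l - m = o - n = ±(N + j)`, the sign being `s`. -/
def tailParam (N : ℕ) : Bool × ℕ × ℕ × ℕ → ℕ × ℕ × ℕ × ℕ
  | (true, j, m, n) => (m + (N + j), m, n, n + (N + j))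
  | (false, j, m, n) => (m, m + (N + j), n + (N + j), n)

section TailParam

variable {N : ℕ}

lemma tailParam_injective (hN : 0 < N) : Function.Injective (tailParam N) := by
  rintro ⟨_ | _, j, m, n⟩ ⟨_ | _, j', m', n'⟩ h <;>
    simp only [tailParam, Prod.mk.injEq, Bool.false_eq_true, Bool.true_eq_false, true_and,
      false_and] at h ⊢ <;> omega

lemma tsum_ite_eq_two_mul_tsum_autocorr_sq (ψ : ℕ → ℝ≥0∞) (hN : 0 < N) :
    ∑' q : ℕ × ℕ × ℕ × ℕ,
        (if (N : ℤ) ≤ |(q.1 : ℤ) - q.2.1| ∧ (N : ℤ) ≤ |(q.2.2.1 : ℤ) - q.2.2.2| ∧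
            (q.1 : ℤ) - q.2.1 + q.2.2.1 - q.2.2.2 = 0 then
          ψ q.1 * ψ q.2.1 * ψ q.2.2.1 * ψ q.2.2.2 else 0)
      = 2 * ∑' j, autocorr ψ (N + j) ^ 2 := by
  rw [← (tailParam_injective hN).tsum_eq]
  · calc ∑' p, _ = ∑' p : Bool × ℕ × ℕ × ℕ,
          ψ p.2.2.1 * ψ (p.2.2.1 + (N + p.2.1)) * (ψ p.2.2.2 * ψ (p.2.2.2 + (N + p.2.1))) := by
          refine tsum_congr ?_
          rintro ⟨_ | _, j, m, n⟩ <;>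
            exact (if_pos (by simp only [tailParam]; push_cast; grind)).trans
              (by simp only [tailParam]; ring)
      _ = 2 * ∑' j, autocorr ψ (N + j) ^ 2 := by
          simp only [ENNReal.tsum_prod', autocorr, sq, ENNReal.tsum_mul_left,
            ENNReal.tsum_mul_right, tsum_bool, two_mul]
  · rintro ⟨l, m, n, o⟩ hq
    obtain ⟨⟨h1, h2, h3⟩, -⟩ := by
      simpa only [ne_eq, ite_eq_right_iff, Classical.not_imp] using Function.mem_support.mp hq
    rw [le_abs'] at h1 h2
    rcases le_total m l with hml | hlm
    · exact ⟨(true, l - m - N, m, n), by simp only [tailParam, Prod.mk.injEq, true_and]; omega⟩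
    · exact ⟨(false, m - l - N, l, o), by
        simp only [tailParam, Prod.mk.injEq, true_and, and_true]; omega⟩

end TailParam

lemma tsum_le_of_tsum_ofReal_le {ι : Type*} {f : ι → ℝ} {b : ℝ} (hf : ∀ i, 0 ≤ f i) (hb : 0 ≤ b)
    (h : ∑' i, ENNReal.ofReal (f i) ≤ ENNReal.ofReal b) : ∑' i, f i ≤ b := by
  calc ∑' i, f i = (∑' i, ENNReal.ofReal (f i)).toReal := by
        rw [ENNReal.tsum_toReal_eq fun _ ↦ ENNReal.ofReal_ne_top]
        simp only [ENNReal.toReal_ofReal (hf _)]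
    _ ≤ b := ENNReal.toReal_le_of_le_ofReal hb h

theorem tail_fourfold_sum_bound (d C : ℝ) (hd0 : 0 < d) (hd : d < 1 / 4)
    (psi : ℕ → ℝ) (hpos : ∀ l, 0 ≤ psi l) (h0 : psi 0 ≤ C)
    (hbound : ∀ l : ℕ, 1 ≤ l → psi l ≤ C * (l : ℝ) ^ (d - 1)) :
    ∃ C' : ℝ, 0 < C' ∧ ∀ N : ℕ, 2 ≤ N →
      (∑' q : ℕ × ℕ × ℕ × ℕ,
          if (N : ℤ) ≤ |(q.1 : ℤ) - q.2.1| ∧ (N : ℤ) ≤ |(q.2.2.1 : ℤ) - q.2.2.2| ∧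
              (q.1 : ℤ) - q.2.1 + q.2.2.1 - q.2.2.2 = 0 then
            psi q.1 * psi q.2.1 * psi q.2.2.1 * psi q.2.2.2 else 0)
        ≤ C' * (N : ℝ) ^ (4 * d - 1) := by
  have hC : 0 ≤ C := (hpos 0).trans h0
  set A : ℝ := 4 * C ^ 2 * (1 / d + (1 + 1 / (1 - 2 * d)))
  have hA : 0 ≤ A := by
    have : 0 < 1 - 2 * d := by linarith
    positivity
  set K : ℝ := 2 * (A ^ 2 * (1 + 1 / (1 - 4 * d)))
  have hK : 0 ≤ K := by
    have : 0 < 1 - 4 * d := by linarith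
    positivity
  refine ⟨K + 1, by linarith, fun N hN ↦ ?_⟩
  have hN0 : 0 < N := by omega
  have hautocorr (k : ℕ) (hk : 0 < k) :=
    autocorr_ofReal_le_of_le_rpow hd0 (by linarith) hC h0 hbound hk
  refine tsum_le_of_tsum_ofReal_le
    (fun q ↦ ite_nonneg (mul_nonneg (mul_nonneg (mul_nonneg (hpos _) (hpos _)) (hpos _)) (hpos _))
      le_rfl) (by positivity) ?_
  calc _ = 2 * ∑' j, autocorr (fun m ↦ ENNReal.ofReal (psi m)) (N + j) ^ 2 := by
        simp only [apply_ite ENNReal.ofReal, ENNReal.ofReal_zero, ENNReal.ofReal_mul' (hpos _)]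
        exact tsum_ite_eq_two_mul_tsum_autocorr_sq (fun m ↦ ENNReal.ofReal (psi m)) hN0
    _ ≤ 2 * ENNReal.ofReal
          (A ^ 2 * ((1 + 1 / -(2 * (2 * d - 1) + 1)) * (N : ℝ) ^ (2 * (2 * d - 1) + 1))) := by
        gcongr
        exact tsum_sq_le_of_le_rpow hA (by linarith) hautocorr hN0
    _ = ENNReal.ofReal (K * (N : ℝ) ^ (4 * d - 1)) := by
        rw [← ENNReal.ofReal_ofNat, ← ENNReal.ofReal_mul zero_le_two]
        congr 1
        simp only [K]
        ring_nf
    _ ≤ ENNReal.ofReal ((K + 1) * (N : ℝ) ^ (4 * d - 1)) := by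
        gcongr
        linarith
end
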